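/- Let f be L-smooth and g proper lsc with argmin(f+g) ≠ ∅, and γ < 1/L. Then f + g has bounded sublevel sets if and only if the Douglas–Rachford envelope φ_γ^{DR} has bounded sublevel sets. -/

import Mathlib

/-!
At a minimiser `x` of the prox objective at `s` the first-order condition reads
`x + γ ∇f(x) = s`. For `γ L < 1` the map `T = id + γ ∇f` is bi-Lipschitz, so the prox map is its
inverse. The descent lemma bounds the model minimised in `φ_γ^{DR}(s)` from below by
`(f + g)(w) + (1/(2γ) - L/2) ‖w - prox s‖²`; since `f + g` is bounded below, a sublevel set of the
envelope is mapped by the prox map into a thickening of a sublevel set of `f + g`. Conversely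
`φ_γ^{DR}(T x) ≤ (f + g)(x)`. Boundedness passes through `T` in both directions.
-/

open Set Filter Bornology

open scoped NNReal RealInnerProductSpace

section

variable {E : Type*} [NormedAddCommGroup E] [InnerProductSpace ℝ E] [CompleteSpace E]
  {f : E → ℝ}

lemma hasDerivAt_comp_add_smul {x v : E} {t : ℝ} (hf : DifferentiableAt ℝ f (x + t • v)) :
    HasDerivAt (fun t : ℝ => f (x + t • v)) ⟪gradient f (x + t • v), v⟫ t := by
  have hline : HasDerivAt (fun t : ℝ => x + t • v) v t := by
    simpa using ((hasDerivAt_id t).smul_const v).const_add x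
  have := hf.hasGradientAt.hasFDerivAt.comp_hasDerivAt t hline
  rwa [InnerProductSpace.toDual_apply_apply] at this

theorem abs_sub_sub_inner_gradient_le {K : ℝ≥0} (hf : Differentiable ℝ f)
    (hK : LipschitzWith K (gradient f)) (x y : E) :
    |f y - f x - ⟪gradient f x, y - x⟫| ≤ K / 2 * ‖y - x‖ ^ 2 := by
  set v := y - x
  have hderiv : ∀ t : ℝ, HasDerivAt (fun t => f (x + t • v) - f x - t * ⟪gradient f x, v⟫)
      (⟪gradient f (x + t • v), v⟫ - ⟪gradient f x, v⟫) t := fun t =>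
    ((hasDerivAt_comp_add_smul (hf _)).sub_const (f x)).sub (hasDerivAt_mul_const _)
  have hbound : ∀ t : ℝ, HasDerivAt (fun t => K / 2 * t ^ 2 * ‖v‖ ^ 2) (K * t * ‖v‖ ^ 2) t :=
    fun t => by
      refine (((hasDerivAt_pow 2 t).const_mul (K / 2 : ℝ)).mul_const (‖v‖ ^ 2)).congr_deriv ?_
      rw [show (2 : ℕ) - 1 = 1 from rfl]
      push_cast
      ring
  have hslope : ∀ t ∈ Ico (0 : ℝ) 1,
      ‖⟪gradient f (x + t • v), v⟫ - ⟪gradient f x, v⟫‖ ≤ K * t * ‖v‖ ^ 2 := by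
    intro t ht
    rw [Real.norm_eq_abs, ← inner_sub_left]
    calc |⟪gradient f (x + t • v) - gradient f x, v⟫|
        ≤ ‖gradient f (x + t • v) - gradient f x‖ * ‖v‖ := abs_real_inner_le_norm _ _
      _ ≤ K * ‖(x + t • v) - x‖ * ‖v‖ := by gcongr; exact hK.norm_sub_le _ _
      _ = K * t * ‖v‖ ^ 2 := by
        rw [add_sub_cancel_left, norm_smul, Real.norm_of_nonneg ht.1]; ring
  simpa [v] using image_norm_le_of_norm_deriv_right_le_deriv_boundary
    (fun t _ => (hderiv t).continuousAt.continuousWithinAt)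
    (fun t _ => (hderiv t).hasDerivWithinAt) (by simp) hbound hslope
    (right_mem_Icc.mpr zero_le_one)

lemma add_smul_gradient_eq_of_isMinOn {γ : ℝ} (hγ : γ ≠ 0) {s x : E}
    (hf : DifferentiableAt ℝ f x)
    (hx : IsMinOn (fun w => f w + 1 / (2 * γ) * ‖w - s‖ ^ 2) univ x) :
    x + γ • gradient f x = s := by
  set u := x + γ • gradient f x - s with hu
  have hderiv := hf.hasGradientAt.hasFDerivAt.add
    (((hasFDerivAt_id x).sub_const s).norm_sq.const_mul (1 / (2 * γ)))
  have hzero : ⟪gradient f x, u⟫ + 1 / (2 * γ) * (2 * ⟪x - s, u⟫) = 0 := by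
    simpa only [add_apply, smul_apply,
      ContinuousLinearMap.comp_apply, InnerProductSpace.toDual_apply_apply, innerSL_apply_apply,
      ContinuousLinearMap.id_apply, id, smul_eq_mul, nsmul_eq_mul, Nat.cast_ofNat,
      zero_apply] using
      congrArg (· u) ((hx.isLocalMin univ_mem).hasFDerivAt_eq_zero hderiv)
  rw [← sub_eq_zero, ← inner_self_eq_zero (𝕜 := ℝ)]
  calc ⟪u, u⟫ = ⟪γ • gradient f x + (x - s), u⟫ := by congr 1; rw [hu]; abel
    _ = γ * (⟪gradient f x, u⟫ + 1 / (2 * γ) * (2 * ⟪x - s, u⟫)) := by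
      rw [inner_add_left, real_inner_smul_left]; field_simp
    _ = 0 := by rw [hzero, mul_zero]

/-- `φ_γ^{DR}(s) = ⨅ w, drModel f g γ (prox_{γf} s) w`. -/
noncomputable def drModel (f : E → ℝ) (g : E → EReal) (γ : ℝ) (x w : E) : EReal :=
  g w + ((f x + ⟪gradient f x, w - x⟫ + 1 / (2 * γ) * ‖w - x‖ ^ 2 : ℝ) : EReal)

lemma add_add_sq_norm_le_drModel {K : ℝ≥0} (hf : Differentiable ℝ f)
    (hK : LipschitzWith K (gradient f)) (g : E → EReal) (γ : ℝ) (x w : E) :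
    (f w : EReal) + g w + ((1 / (2 * γ) - K / 2) * ‖w - x‖ ^ 2 : ℝ) ≤ drModel f g γ x w := by
  have hdescent := (abs_le.mp (abs_sub_sub_inner_gradient_le hf hK x w)).2
  calc (f w : EReal) + g w + ((1 / (2 * γ) - K / 2) * ‖w - x‖ ^ 2 : ℝ)
      = g w + ((f w + (1 / (2 * γ) - K / 2) * ‖w - x‖ ^ 2 : ℝ) : EReal) := by
        rw [EReal.coe_add, add_comm (f w : EReal), add_assoc]
    _ ≤ drModel f g γ x w := by
      unfold drModel
      gcongr g w + ?_
      exact EReal.coe_le_coe_iff.mpr (by linarith)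

end

lemma sublevel_iInf_subset_cthickening {X : Type*} [PseudoMetricSpace X] {F : X → EReal}
    {Φ : X → X → EReal} {m c α : ℝ} (hc : 0 < c) (hm : ∀ w, (m : EReal) ≤ F w)
    (hΦ : ∀ x w, F w + ((c * dist w x ^ 2 : ℝ) : EReal) ≤ Φ x w) :
    {x | ⨅ w, Φ x w ≤ α} ⊆
      Metric.cthickening √((α + 1 - m) / c) {w | F w ≤ ((α + 1 : ℝ) : EReal)} := by
  intro x hx
  obtain ⟨w, hw⟩ := iInf_lt_iff.mp (hx.out.trans_lt (EReal.coe_lt_coe_iff.mpr (lt_add_one α)))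
  have hlt := (hΦ x w).trans_lt hw
  refine Metric.mem_cthickening_of_dist_le x w _ _ ?_ ?_
  · exact (le_add_of_nonneg_right (EReal.coe_nonneg.mpr (by positivity))).trans hlt.le
  · have hreal : m + c * dist w x ^ 2 < α + 1 := by
      exact_mod_cast ((add_le_add_left (hm w) _).trans_lt hlt)
    rw [dist_comm]
    refine Real.le_sqrt_of_sq_le ?_
    rw [le_div_iff₀ hc]
    linarith

theorem DRE_level_boundedness_equiv_general {n : ℕ} (f : EuclideanSpace ℝ (Fin n) → ℝ)
    (g : EuclideanSpace ℝ (Fin n) → EReal) (L γ : ℝ) (hL : 0 < L)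
    (hC1 : ContDiff ℝ 1 f)
    (hLip : ∀ x y, ‖gradient f x - gradient f y‖ ≤ L * ‖x - y‖)
    (hgbot : ∀ x, g x ≠ ⊥)
    (hγ0 : 0 < γ) (hγ : γ < 1 / L)
    (hargmin : {x | IsMinOn (fun x => ((f x : ℝ) : EReal) + g x) Set.univ x}.Nonempty)
    (pf : EuclideanSpace ℝ (Fin n) → EuclideanSpace ℝ (Fin n))
    (hpf : ∀ s, IsMinOn (fun w => f w + 1 / (2 * γ) * ‖w - s‖ ^ 2) Set.univ (pf s)) :
    (∀ α : ℝ, IsBounded {x | ((f x : ℝ) : EReal) + g x ≤ (α : EReal)}) ↔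
    (∀ α : ℝ, IsBounded {s | (⨅ w, (g w + ((f (pf s)
      + (inner ℝ (gradient f (pf s)) (w - pf s) : ℝ)
      + 1 / (2 * γ) * ‖w - pf s‖ ^ 2 : ℝ) : EReal))) ≤ (α : EReal)}) := by
  lift L to ℝ≥0 using hL.le
  have hγL : γ * L < 1 := (lt_div_iff₀ hL).mp hγ
  have hf : Differentiable ℝ f := hC1.differentiable one_ne_zero
  have hK : LipschitzWith L (gradient f) :=
    LipschitzWith.of_dist_le_mul fun x y => by simpa only [dist_eq_norm] using hLip x y
  have hγK : ‖γ‖₊ * L < 1⁻¹ := by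
    rw [inv_one, ← NNReal.coe_lt_coe]
    simpa [abs_of_pos hγ0] using hγL
  set T := fun x => x + γ • gradient f x
  have hT_lip : LipschitzWith _ T := LipschitzWith.id.add ((lipschitzWith_smul γ).comp hK)
  have hT_anti : AntilipschitzWith _ T :=
    AntilipschitzWith.id.add_lipschitzWith ((lipschitzWith_smul γ).comp hK) hγK
  have hT_pf (s) : T (pf s) = s := add_smul_gradient_eq_of_isMinOn hγ0.ne' (hf _) (hpf s)
  have hpf_T (x) : pf (T x) = x := hT_anti.injective (hT_pf (T x))
  change (∀ α : ℝ, IsBounded {x | ((f x : ℝ) : EReal) + g x ≤ α}) ↔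
    ∀ α : ℝ, IsBounded {s | ⨅ w, drModel f g γ (pf s) w ≤ α}
  constructor
  · intro hF α
    obtain ⟨x₀, hx₀⟩ := hargmin
    have hc : 0 < 1 / (2 * γ) - L / 2 := by
      rw [show 1 / (2 * γ) - L / 2 = (1 - γ * L) / (2 * γ) by field_simp]
      exact div_pos (by linarith) (by positivity)
    have hbelow (w) : (((f x₀ : EReal) + g x₀).toReal : EReal) ≤ f w + g w :=
      (EReal.coe_toReal_le (EReal.add_ne_bot_iff.mpr ⟨EReal.coe_ne_bot _, hgbot x₀⟩)).trans
        (hx₀ (mem_univ w))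
    have hsub := sublevel_iInf_subset_cthickening (α := α) hc hbelow fun x w => by
      simpa only [dist_eq_norm] using add_add_sq_norm_le_drModel hf hK g γ x w
    exact (hT_lip.isBounded_image (hF (α + 1)).cthickening).subset
      fun s hs => ⟨pf s, hsub hs, hT_pf s⟩
  · intro hφ α
    refine (hT_anti.isBounded_preimage (hφ α)).subset fun x hx => ?_
    show ⨅ w, drModel f g γ (pf (T x)) w ≤ α
    rw [hpf_T]
    exact (iInf_le _ x).trans (by simpa [drModel, add_comm] using hx)

/-- For `f` `L`-smooth and `g` proper lsc with `argmin(f+g) ≠ ∅` and `γ < 1/L`,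
`f + g` has bounded sublevel sets iff the Douglas–Rachford envelope `φ_γ^{DR}` has bounded
sublevel sets. -/
theorem DRE_level_boundedness_equiv {n : ℕ} (f : EuclideanSpace ℝ (Fin n) → ℝ)
    (g : EuclideanSpace ℝ (Fin n) → EReal) (L γ : ℝ) (hL : 0 < L)
    (hC1 : ContDiff ℝ 1 f)
    (hLip : ∀ x y, ‖gradient f x - gradient f y‖ ≤ L * ‖x - y‖)
    (hgproper : ∃ x, g x ≠ ⊤) (hgbot : ∀ x, g x ≠ ⊥) (hglsc : LowerSemicontinuous g)
    (hγ0 : 0 < γ) (hγ : γ < 1 / L)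
    (hargmin : {x | IsMinOn (fun x => ((f x : ℝ) : EReal) + g x) Set.univ x}.Nonempty)
    (pf : EuclideanSpace ℝ (Fin n) → EuclideanSpace ℝ (Fin n))
    (hpf : ∀ s, IsMinOn (fun w => f w + 1 / (2 * γ) * ‖w - s‖ ^ 2) Set.univ (pf s)) :
    (∀ α : ℝ, IsBounded {x | ((f x : ℝ) : EReal) + g x ≤ (α : EReal)}) ↔
    (∀ α : ℝ, IsBounded {s | (⨅ w, (g w + ((f (pf s)
      + (inner ℝ (gradient f (pf s)) (w - pf s) : ℝ)
      + 1 / (2 * γ) * ‖w - pf s‖ ^ 2 : ℝ) : EReal))) ≤ (α : EReal)}) :=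
  DRE_level_boundedness_equiv_general f g L γ hL hC1 hLip hgbot hγ0 hγ hargmin pf hpf
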